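/- Let S be a binomial generating set of the lattice ideal I_L and F an I_L-fiber. Then I_{<F̄} = ⟨B : B ∈ S, F̄_B <_I F̄⟩ and I_{≤F̄} = ⟨B : B ∈ S, F̄_B ≤_I F̄⟩. -/

import Mathlib

open MvPolynomial

noncomputable section

/-- The integer vector associated to a natural exponent vector. -/
def natVec {ι : Type*} (u : ι →₀ ℕ) : ι → ℤ := fun i => (u i : ℤ)

/-- The lattice ideal `I_L` of a lattice `L ⊆ ℤ^ι` in `k[x_i : i ∈ ι]`. -/
def latticeIdeal (k : Type*) [Field k] {ι : Type*} (L : Submodule ℤ (ι → ℤ)) :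
    Ideal (MvPolynomial ι k) :=
  Ideal.span {f | ∃ u v : ι →₀ ℕ, natVec u - natVec v ∈ L ∧
    f = monomial u (1 : k) - monomial v 1}

/-- `f` is a binomial `x^u - x^v` belonging to the lattice ideal `I_L`. -/
def IsLatticeBinomial (k : Type*) [Field k] {ι : Type*} (L : Submodule ℤ (ι → ℤ))
    (f : MvPolynomial ι k) : Prop :=
  ∃ u v : ι →₀ ℕ, natVec u - natVec v ∈ L ∧ f = monomial u (1 : k) - monomial v 1

/-- The `I_L`-fiber of `u` : all exponent vectors `v` with `v - u ∈ L`. -/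
def fiber {ι : Type*} (L : Submodule ℤ (ι → ℤ)) (u : ι →₀ ℕ) : Set (ι →₀ ℕ) :=
  {v | natVec v - natVec u ∈ L}

/-- `L⁺ = L ∩ ℕ^ι`. -/
def Lplus {ι : Type*} (L : Submodule ℤ (ι → ℤ)) : Set (ι → ℤ) :=
  {w | w ∈ L ∧ ∀ i, 0 ≤ w i}

/-- `L_pure`, the subgroup of `L` generated by `L⁺`. -/
def Lpure {ι : Type*} (L : Submodule ℤ (ι → ℤ)) : Submodule ℤ (ι → ℤ) :=
  Submodule.span ℤ (Lplus L)

/-- `σ_L`, the union of the supports of elements of `L⁺`. -/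
def sigmaL {ι : Type*} (L : Submodule ℤ (ι → ℤ)) : Set ι :=
  {i | ∃ w ∈ Lplus L, w i ≠ 0}

/-- `F̄ ≤_I Ḡ` : some translate of `F` is contained in `G`. -/
def fiberLE {ι : Type*} (F G : Set (ι →₀ ℕ)) : Prop :=
  ∃ t : ι →₀ ℕ, (fun v => t + v) '' F ⊆ G

/-- `F ≡_I G` : equivalence of fibers. -/
def fiberEquiv {ι : Type*} (F G : Set (ι →₀ ℕ)) : Prop :=
  fiberLE F G ∧ fiberLE G F

/-- `F̄ <_I Ḡ`. -/
def fiberLT {ι : Type*} (F G : Set (ι →₀ ℕ)) : Prop :=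
  fiberLE F G ∧ ¬ fiberEquiv F G

/-- The ideal `I_{<F̄}` generated by binomials of `I_L` whose fiber class is `<_I F̄`. -/
def idealLT (k : Type*) [Field k] {ι : Type*} (L : Submodule ℤ (ι → ℤ))
    (F : Set (ι →₀ ℕ)) : Ideal (MvPolynomial ι k) :=
  Ideal.span {f | ∃ u v : ι →₀ ℕ, natVec u - natVec v ∈ L ∧
    f = monomial u (1 : k) - monomial v 1 ∧ fiberLT (fiber L u) F}

/-- The ideal `I_{≤F̄}` generated by binomials of `I_L` whose fiber class is `≤_I F̄`. -/
def idealLE (k : Type*) [Field k] {ι : Type*} (L : Submodule ℤ (ι → ℤ))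
    (F : Set (ι →₀ ℕ)) : Ideal (MvPolynomial ι k) :=
  Ideal.span {f | ∃ u v : ι →₀ ℕ, natVec u - natVec v ∈ L ∧
    f = monomial u (1 : k) - monomial v 1 ∧ fiberLE (fiber L u) F}

/-- `μ(I_L)` : the least cardinality of a binomial generating set of `I_L`. -/
def muIdeal (k : Type*) [Field k] {ι : Type*} (L : Submodule ℤ (ι → ℤ)) : ℕ :=
  sInf {m | ∃ S : Finset (MvPolynomial ι k), S.card = m ∧
    (∀ f ∈ S, IsLatticeBinomial k L f) ∧
    Ideal.span (S : Set (MvPolynomial ι k)) = latticeIdeal k L}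

/-- A Markov basis of `I_L` : a binomial generating set of least cardinality `μ(I_L)`. -/
def IsMarkovBasis (k : Type*) [Field k] {ι : Type*} (L : Submodule ℤ (ι → ℤ))
    (S : Finset (MvPolynomial ι k)) : Prop :=
  (∀ f ∈ S, IsLatticeBinomial k L f) ∧
  Ideal.span (S : Set (MvPolynomial ι k)) = latticeIdeal k L ∧
  S.card = muIdeal k L

/-- `u` is an `L`-primitive vector : `u ≠ 0`, `u ∈ L`, and whenever `q • u ∈ L` for
a rational `q`, then `q` is an integer. -/
def IsLPrimitive {ι : Type*} (L : Submodule ℤ (ι → ℤ)) (u : ι → ℤ) : Prop :=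
  u ≠ 0 ∧ u ∈ L ∧ ∀ (q : ℚ) (w : ι → ℤ), w ∈ L →
    (∀ i, (w i : ℚ) = q * (u i : ℚ)) → ∃ m : ℤ, q = (m : ℚ)

/-- Projection onto the coordinates in `σ_L`. -/
def projSigma {n : ℕ} (L : Submodule ℤ (Fin n → ℤ)) :
    (Fin n → ℤ) →ₗ[ℤ] ({i : Fin n // i ∈ sigmaL L} → ℤ) :=
  LinearMap.pi fun j => LinearMap.proj j.1

/-- Projection onto the coordinates outside `σ_L` (giving `u ↦ u^σ`). -/
def projCompl {n : ℕ} (L : Submodule ℤ (Fin n → ℤ)) :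
    (Fin n → ℤ) →ₗ[ℤ] ({i : Fin n // i ∉ sigmaL L} → ℤ) :=
  LinearMap.pi fun j => LinearMap.proj j.1

/-- An indispensable binomial: it appears, up to a constant multiple, in every Markov basis. -/
def IsIndispensableBinomial (k : Type*) [Field k] {ι : Type*} (L : Submodule ℤ (ι → ℤ))
    (f : MvPolynomial ι k) : Prop :=
  ∀ S : Finset (MvPolynomial ι k), IsMarkovBasis k L S → ∃ c : k, c ≠ 0 ∧ c • f ∈ S

/-- An indispensable monomial: every Markov basis contains a binomial having it as a term. -/
def IsIndispensableMonomial (k : Type*) [Field k] {ι : Type*} (L : Submodule ℤ (ι → ℤ))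
    (u : ι →₀ ℕ) : Prop :=
  ∀ S : Finset (MvPolynomial ι k), IsMarkovBasis k L S → ∃ f ∈ S, ∃ v : ι →₀ ℕ,
    f = monomial u (1 : k) - monomial v 1 ∨ f = monomial v (1 : k) - monomial u 1


/-! The polynomial ring is graded by `ℤ^ι / L`, with `x^u` of degree the class of `u`; the
monomials of degree `[u]` are exactly those whose exponent lies in the fiber `F_u`, and every
binomial of `I_L` is homogeneous. Write a binomial `x^u - x^v ∈ I_L` as `∑ gᵢ sᵢ` with `sᵢ ∈ S`
and take the homogeneous component of degree `[u]`. A monomial `x^m` of `gᵢ` survives only if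
`m + aᵢ ∈ F_u`, where `x^aᵢ` is a term of `sᵢ`, and then `m + F_{sᵢ} ⊆ F_u`, i.e.
`F̄_{sᵢ} ≤_I F̄_u`. So for every class of fibers closed downwards under `≤_I`, such as
`{Ḡ : Ḡ <_I F̄}` and `{Ḡ : Ḡ ≤_I F̄}`, the binomials of `S` in that class generate the same
ideal as all binomials of `I_L` in it. -/

section Fibers

variable {ι : Type*} {L : Submodule ℤ (ι → ℤ)}

lemma natVec_add (a b : ι →₀ ℕ) : natVec (a + b) = natVec a + natVec b := by
  funext i
  simp [natVec]

lemma fiberLE_trans {F G H : Set (ι →₀ ℕ)} (hFG : fiberLE F G) (hGH : fiberLE G H) :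
    fiberLE F H := by
  obtain ⟨t, ht⟩ := hFG
  obtain ⟨s, hs⟩ := hGH
  refine ⟨s + t, ?_⟩
  rintro _ ⟨x, hx, rfl⟩
  show s + t + x ∈ H
  rw [add_assoc]
  exact hs ⟨t + x, ht ⟨x, hx, rfl⟩, rfl⟩

lemma fiberLT_of_fiberLE_of_fiberLT {F G H : Set (ι →₀ ℕ)} (hFG : fiberLE F G)
    (hGH : fiberLT G H) : fiberLT F H :=
  ⟨fiberLE_trans hFG hGH.1, fun hFH => hGH.2 ⟨hGH.1, fiberLE_trans hFH.2 hFG⟩⟩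

lemma fiberLE_fiber_of_add_mem_fiber {m a u : ι →₀ ℕ} (h : m + a ∈ fiber L u) :
    fiberLE (fiber L a) (fiber L u) := by
  refine ⟨m, ?_⟩
  rintro _ ⟨x, hx, rfl⟩
  have hx' : natVec x - natVec a ∈ L := hx
  have h' : natVec (m + a) - natVec u ∈ L := h
  show natVec (m + x) - natVec u ∈ L
  convert L.add_mem hx' h' using 1
  rw [natVec_add, natVec_add]
  abel

variable (L) in
def latticeWeight : ι → (ι → ℤ) ⧸ L := fun i => L.mkQ (natVec (Finsupp.single i 1))

lemma weight_latticeWeight (u : ι →₀ ℕ) :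
    Finsupp.weight (latticeWeight L) u = L.mkQ (natVec u) := by
  induction u using Finsupp.induction with
  | zero => exact (map_zero L.mkQ).symm
  | single_add i c u _ _ ih =>
    have hsingle : natVec (Finsupp.single i c) = (c : ℤ) • natVec (Finsupp.single i 1) := by
      funext j
      by_cases hij : i = j <;> simp [natVec, hij]
    rw [map_add, ih, natVec_add, hsingle, map_add, map_zsmul, Finsupp.weight_single,
      latticeWeight, natCast_zsmul]

lemma mem_fiber_iff_weight_eq {u v : ι →₀ ℕ} :
    v ∈ fiber L u ↔
      Finsupp.weight (latticeWeight L) v = Finsupp.weight (latticeWeight L) u := by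
  rw [weight_latticeWeight, weight_latticeWeight, Submodule.mkQ_apply, Submodule.mkQ_apply,
    Submodule.Quotient.eq]
  rfl

lemma isWeightedHomogeneous_binomial (k : Type*) [CommRing k] {u v : ι →₀ ℕ}
    (huv : natVec u - natVec v ∈ L) :
    IsWeightedHomogeneous (latticeWeight L) (monomial u (1 : k) - monomial v 1)
      (Finsupp.weight (latticeWeight L) u) := by
  refine (isWeightedHomogeneous_monomial _ _ _ rfl).sub
    (isWeightedHomogeneous_monomial _ _ _ ?_)
  rw [← mem_fiber_iff_weight_eq]
  simpa [fiber] using L.neg_mem huv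

end Fibers

section DownwardClosed

variable {k : Type*} {ι : Type*} {L : Submodule ℤ (ι → ℤ)}

variable (k L) in
def latticeBinomialsWith [CommRing k] (P : Set (ι →₀ ℕ) → Prop) : Set (MvPolynomial ι k) :=
  {f | ∃ u v : ι →₀ ℕ, natVec u - natVec v ∈ L ∧
    f = monomial u (1 : k) - monomial v 1 ∧ P (fiber L u)}

variable {P : Set (ι →₀ ℕ) → Prop} {u : ι →₀ ℕ}

lemma weightedHomogeneousComponent_mul_binomial_mem_span [CommRing k]
    (hP : ∀ ⦃F G⦄, fiberLE F G → P G → P F) (hPu : P (fiber L u))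
    {S : Set (MvPolynomial ι k)} {a b : ι →₀ ℕ}
    (hab : natVec a - natVec b ∈ L) (hs : monomial a (1 : k) - monomial b 1 ∈ S)
    (g : MvPolynomial ι k) :
    weightedHomogeneousComponent (latticeWeight L) (Finsupp.weight (latticeWeight L) u)
        (g * (monomial a 1 - monomial b 1)) ∈
      Ideal.span (S ∩ latticeBinomialsWith k L P) := by
  induction g using MvPolynomial.induction_on' with
  | add g₁ g₂ h₁ h₂ =>
    rw [add_mul, map_add]
    exact add_mem h₁ h₂
  | monomial m c =>
    have hom := (isWeightedHomogeneous_monomial (latticeWeight L) m c rfl).mul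
      (isWeightedHomogeneous_binomial k hab)
    by_cases hdeg : Finsupp.weight (latticeWeight L) m + Finsupp.weight (latticeWeight L) a =
        Finsupp.weight (latticeWeight L) u
    · have hmem : m + a ∈ fiber L u := by rwa [mem_fiber_iff_weight_eq, map_add]
      rw [hdeg] at hom
      rw [hom.weightedHomogeneousComponent_same]
      exact Ideal.mul_mem_left _ _ <| Ideal.subset_span
        ⟨hs, a, b, hab, rfl, hP (fiberLE_fiber_of_add_mem_fiber hmem) hPu⟩
    · rw [hom.weightedHomogeneousComponent_ne _ (Ne.symm hdeg)]
      exact zero_mem _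

lemma weightedHomogeneousComponent_mul_mem_span [Field k]
    (hP : ∀ ⦃F G⦄, fiberLE F G → P G → P F) (hPu : P (fiber L u)) {S : Set (MvPolynomial ι k)}
    (hSbin : ∀ f ∈ S, IsLatticeBinomial k L f) {x : MvPolynomial ι k}
    (hx : x ∈ Ideal.span S) (g : MvPolynomial ι k) :
    weightedHomogeneousComponent (latticeWeight L) (Finsupp.weight (latticeWeight L) u)
        (g * x) ∈ Ideal.span (S ∩ latticeBinomialsWith k L P) := by
  induction hx using Submodule.span_induction generalizing g with
  | mem s hs =>
    obtain ⟨a, b, hab, rfl⟩ := hSbin s hs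
    exact weightedHomogeneousComponent_mul_binomial_mem_span hP hPu hab hs g
  | zero => simp
  | add x y _ _ hx hy =>
    rw [mul_add, map_add]
    exact add_mem (hx g) (hy g)
  | smul c x _ hx =>
    rw [smul_eq_mul, ← mul_assoc]
    exact hx (g * c)

theorem span_inter_latticeBinomialsWith [Field k]
    (hP : ∀ ⦃F G⦄, fiberLE F G → P G → P F) {S : Set (MvPolynomial ι k)}
    (hSbin : ∀ f ∈ S, IsLatticeBinomial k L f)
    (hSgen : Ideal.span S = latticeIdeal k L) :
    Ideal.span (S ∩ latticeBinomialsWith k L P) = Ideal.span (latticeBinomialsWith k L P) := by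
  refine le_antisymm (Ideal.span_mono Set.inter_subset_right) (Ideal.span_le.mpr ?_)
  rintro _ ⟨u, v, huv, rfl, hPu⟩
  have hmem : monomial u (1 : k) - monomial v 1 ∈ Ideal.span S :=
    hSgen ▸ Ideal.subset_span ⟨u, v, huv, rfl⟩
  rw [← (isWeightedHomogeneous_binomial k huv).weightedHomogeneousComponent_same,
    ← one_mul (monomial u (1 : k) - monomial v 1)]
  exact weightedHomogeneousComponent_mul_mem_span hP hPu hSbin hmem 1

end DownwardClosed

/-- for any binomial generating set `S` of `I_L` and any fiber `F`,
`I_{<F̄}` (resp. `I_{≤F̄}`) is generated by the elements of `S` whose fiber class is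
`<_I F̄` (resp. `≤_I F̄`). -/
theorem stmt11 (k : Type*) [Field k] {n : ℕ} (L : Submodule ℤ (Fin n → ℤ))
    (S : Set (MvPolynomial (Fin n) k))
    (hSbin : ∀ f ∈ S, IsLatticeBinomial k L f)
    (hSgen : Ideal.span S = latticeIdeal k L)
    (w : Fin n →₀ ℕ) :
    idealLT k L (fiber L w) =
      Ideal.span {f | f ∈ S ∧ ∃ u v : Fin n →₀ ℕ, natVec u - natVec v ∈ L ∧
        f = monomial u (1 : k) - monomial v 1 ∧ fiberLT (fiber L u) (fiber L w)} ∧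
    idealLE k L (fiber L w) =
      Ideal.span {f | f ∈ S ∧ ∃ u v : Fin n →₀ ℕ, natVec u - natVec v ∈ L ∧
        f = monomial u (1 : k) - monomial v 1 ∧ fiberLE (fiber L u) (fiber L w)} := by
  exact ⟨(span_inter_latticeBinomialsWith
      (fun _ _ hFG => fiberLT_of_fiberLE_of_fiberLT hFG) hSbin hSgen).symm,
    (span_inter_latticeBinomialsWith (fun _ _ => fiberLE_trans) hSbin hSgen).symm⟩
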